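/- Let $e_1,\dots,e_4$ be a basis of $\mathbb{R}^4$, let $B_{PQ} := \ast(e_P \wedge e_Q)$ be the Minkowski-Hodge-dualized wedge products, and let $B'_{PQ} := \epsilon_{PQ} B_{PQ}$ for arbitrary signs $\epsilon_{PQ} = \epsilon_{QP} \in \{\pm 1\}$. Then $B' = -B$ (all signs $-1$) satisfies both: (a) for each $P$ there is a nonzero vector $n_P$ with $n_{P I} B'^{IJ}_{PQ} = 0$ for all $Q$ (Condition G1), and (b) the volume-matching condition $\epsilon_{IJKL}B'^{IJ}_{PQ} B'^{KL}_{RS} = \epsilon_{IJKL}B'^{IJ}_{P'Q'}B'^{KL}_{R'S'}$ for all partitions $\{P,Q\}\sqcup\{R,S\} = \{P',Q'\}\sqcup\{R',S'\} = \{1,2,3,4\}$ taken with orientation signs (Condition G2); yet $B'$ cannot be written as $\ast(e'_P \wedge e'_Q)$ for any real vectors $e'_P$. -/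

import Mathlib

open Finset BigOperators

noncomputable section

/-- Totally antisymmetric symbol: sign of the tuple `a` (0 if entries repeat). -/
def epsSgn {n : ℕ} (a : Fin n → Fin n) : ℤ :=
  ∏ i : Fin n, ∏ j : Fin n,
    if i < j then (if a i < a j then 1 else if a j < a i then -1 else 0) else 1

/-- Levi-Civita symbol on five indices, `eps5 0 1 2 3 4 = 1`. -/
def eps5 (P Q R S T : Fin 5) : ℤ := epsSgn ![P, Q, R, S, T]

/-- Levi-Civita symbol on four indices, `eps4 0 1 2 3 = 1`. -/
def eps4 (I J K L : Fin 4) : ℤ := epsSgn ![I, J, K, L]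

/-- Diagonal entries of the Minkowski metric η = diag(-1,1,1,1). -/
def etaD (I : Fin 4) : ℝ := if I = 0 then -1 else 1

/-- The Minkowski metric η = diag(-1,1,1,1). -/
def eta (I J : Fin 4) : ℝ := if I = J then etaD I else 0

/-- Wedge product of two vectors, `(e ∧ f)^{IJ} = e^I f^J - e^J f^I`. -/
def wedgeV (e f : Fin 4 → ℝ) (I J : Fin 4) : ℝ := e I * f J - e J * f I

/-- Minkowski Hodge dual on 2-tensors: `(∗B)^{IJ} = (1/2) ε^{IJ}_{KL} B^{KL}`. -/
def hodge (B : Fin 4 → Fin 4 → ℝ) (I J : Fin 4) : ℝ :=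
  (1 / 2) * etaD I * etaD J * ∑ K : Fin 4, ∑ L : Fin 4, (eps4 I J K L : ℝ) * B K L

/-- The volume pairing `V(B,B') = ε_{IJKL} B^{IJ} B'^{KL}`. -/
def Vpair (B B' : Fin 4 → Fin 4 → ℝ) : ℝ :=
  ∑ I : Fin 4, ∑ J : Fin 4, ∑ K : Fin 4, ∑ L : Fin 4,
    (eps4 I J K L : ℝ) * B I J * B' K L

/-- The sign-flipped field `B'_{PQ} := -∗(e_P ∧ e_Q)`. -/
def Bneg (e : Fin 4 → Fin 4 → ℝ) (P Q I J : Fin 4) : ℝ :=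
  -hodge (wedgeV (e P) (e Q)) I J

@[simp] lemma eps4_0000 : eps4 0 0 0 0 = 0 := by decide
@[simp] lemma eps4_0001 : eps4 0 0 0 1 = 0 := by decide
@[simp] lemma eps4_0002 : eps4 0 0 0 2 = 0 := by decide
@[simp] lemma eps4_0003 : eps4 0 0 0 3 = 0 := by decide
@[simp] lemma eps4_0010 : eps4 0 0 1 0 = 0 := by decide
@[simp] lemma eps4_0011 : eps4 0 0 1 1 = 0 := by decide
@[simp] lemma eps4_0012 : eps4 0 0 1 2 = 0 := by decide
@[simp] lemma eps4_0013 : eps4 0 0 1 3 = 0 := by decide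
@[simp] lemma eps4_0020 : eps4 0 0 2 0 = 0 := by decide
@[simp] lemma eps4_0021 : eps4 0 0 2 1 = 0 := by decide
@[simp] lemma eps4_0022 : eps4 0 0 2 2 = 0 := by decide
@[simp] lemma eps4_0023 : eps4 0 0 2 3 = 0 := by decide
@[simp] lemma eps4_0030 : eps4 0 0 3 0 = 0 := by decide
@[simp] lemma eps4_0031 : eps4 0 0 3 1 = 0 := by decide
@[simp] lemma eps4_0032 : eps4 0 0 3 2 = 0 := by decide
@[simp] lemma eps4_0033 : eps4 0 0 3 3 = 0 := by decide
@[simp] lemma eps4_0100 : eps4 0 1 0 0 = 0 := by decide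
@[simp] lemma eps4_0101 : eps4 0 1 0 1 = 0 := by decide
@[simp] lemma eps4_0102 : eps4 0 1 0 2 = 0 := by decide
@[simp] lemma eps4_0103 : eps4 0 1 0 3 = 0 := by decide
@[simp] lemma eps4_0110 : eps4 0 1 1 0 = 0 := by decide
@[simp] lemma eps4_0111 : eps4 0 1 1 1 = 0 := by decide
@[simp] lemma eps4_0112 : eps4 0 1 1 2 = 0 := by decide
@[simp] lemma eps4_0113 : eps4 0 1 1 3 = 0 := by decide
@[simp] lemma eps4_0120 : eps4 0 1 2 0 = 0 := by decide
@[simp] lemma eps4_0121 : eps4 0 1 2 1 = 0 := by decide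
@[simp] lemma eps4_0122 : eps4 0 1 2 2 = 0 := by decide
@[simp] lemma eps4_0123 : eps4 0 1 2 3 = 1 := by decide
@[simp] lemma eps4_0130 : eps4 0 1 3 0 = 0 := by decide
@[simp] lemma eps4_0131 : eps4 0 1 3 1 = 0 := by decide
@[simp] lemma eps4_0132 : eps4 0 1 3 2 = -1 := by decide
@[simp] lemma eps4_0133 : eps4 0 1 3 3 = 0 := by decide
@[simp] lemma eps4_0200 : eps4 0 2 0 0 = 0 := by decide
@[simp] lemma eps4_0201 : eps4 0 2 0 1 = 0 := by decide
@[simp] lemma eps4_0202 : eps4 0 2 0 2 = 0 := by decide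
@[simp] lemma eps4_0203 : eps4 0 2 0 3 = 0 := by decide
@[simp] lemma eps4_0210 : eps4 0 2 1 0 = 0 := by decide
@[simp] lemma eps4_0211 : eps4 0 2 1 1 = 0 := by decide
@[simp] lemma eps4_0212 : eps4 0 2 1 2 = 0 := by decide
@[simp] lemma eps4_0213 : eps4 0 2 1 3 = -1 := by decide
@[simp] lemma eps4_0220 : eps4 0 2 2 0 = 0 := by decide
@[simp] lemma eps4_0221 : eps4 0 2 2 1 = 0 := by decide
@[simp] lemma eps4_0222 : eps4 0 2 2 2 = 0 := by decide
@[simp] lemma eps4_0223 : eps4 0 2 2 3 = 0 := by decide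
@[simp] lemma eps4_0230 : eps4 0 2 3 0 = 0 := by decide
@[simp] lemma eps4_0231 : eps4 0 2 3 1 = 1 := by decide
@[simp] lemma eps4_0232 : eps4 0 2 3 2 = 0 := by decide
@[simp] lemma eps4_0233 : eps4 0 2 3 3 = 0 := by decide
@[simp] lemma eps4_0300 : eps4 0 3 0 0 = 0 := by decide
@[simp] lemma eps4_0301 : eps4 0 3 0 1 = 0 := by decide
@[simp] lemma eps4_0302 : eps4 0 3 0 2 = 0 := by decide
@[simp] lemma eps4_0303 : eps4 0 3 0 3 = 0 := by decide
@[simp] lemma eps4_0310 : eps4 0 3 1 0 = 0 := by decide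
@[simp] lemma eps4_0311 : eps4 0 3 1 1 = 0 := by decide
@[simp] lemma eps4_0312 : eps4 0 3 1 2 = 1 := by decide
@[simp] lemma eps4_0313 : eps4 0 3 1 3 = 0 := by decide
@[simp] lemma eps4_0320 : eps4 0 3 2 0 = 0 := by decide
@[simp] lemma eps4_0321 : eps4 0 3 2 1 = -1 := by decide
@[simp] lemma eps4_0322 : eps4 0 3 2 2 = 0 := by decide
@[simp] lemma eps4_0323 : eps4 0 3 2 3 = 0 := by decide
@[simp] lemma eps4_0330 : eps4 0 3 3 0 = 0 := by decide
@[simp] lemma eps4_0331 : eps4 0 3 3 1 = 0 := by decide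
@[simp] lemma eps4_0332 : eps4 0 3 3 2 = 0 := by decide
@[simp] lemma eps4_0333 : eps4 0 3 3 3 = 0 := by decide
@[simp] lemma eps4_1000 : eps4 1 0 0 0 = 0 := by decide
@[simp] lemma eps4_1001 : eps4 1 0 0 1 = 0 := by decide
@[simp] lemma eps4_1002 : eps4 1 0 0 2 = 0 := by decide
@[simp] lemma eps4_1003 : eps4 1 0 0 3 = 0 := by decide
@[simp] lemma eps4_1010 : eps4 1 0 1 0 = 0 := by decide
@[simp] lemma eps4_1011 : eps4 1 0 1 1 = 0 := by decide
@[simp] lemma eps4_1012 : eps4 1 0 1 2 = 0 := by decide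
@[simp] lemma eps4_1013 : eps4 1 0 1 3 = 0 := by decide
@[simp] lemma eps4_1020 : eps4 1 0 2 0 = 0 := by decide
@[simp] lemma eps4_1021 : eps4 1 0 2 1 = 0 := by decide
@[simp] lemma eps4_1022 : eps4 1 0 2 2 = 0 := by decide
@[simp] lemma eps4_1023 : eps4 1 0 2 3 = -1 := by decide
@[simp] lemma eps4_1030 : eps4 1 0 3 0 = 0 := by decide
@[simp] lemma eps4_1031 : eps4 1 0 3 1 = 0 := by decide
@[simp] lemma eps4_1032 : eps4 1 0 3 2 = 1 := by decide
@[simp] lemma eps4_1033 : eps4 1 0 3 3 = 0 := by decide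
@[simp] lemma eps4_1100 : eps4 1 1 0 0 = 0 := by decide
@[simp] lemma eps4_1101 : eps4 1 1 0 1 = 0 := by decide
@[simp] lemma eps4_1102 : eps4 1 1 0 2 = 0 := by decide
@[simp] lemma eps4_1103 : eps4 1 1 0 3 = 0 := by decide
@[simp] lemma eps4_1110 : eps4 1 1 1 0 = 0 := by decide
@[simp] lemma eps4_1111 : eps4 1 1 1 1 = 0 := by decide
@[simp] lemma eps4_1112 : eps4 1 1 1 2 = 0 := by decide
@[simp] lemma eps4_1113 : eps4 1 1 1 3 = 0 := by decide
@[simp] lemma eps4_1120 : eps4 1 1 2 0 = 0 := by decide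
@[simp] lemma eps4_1121 : eps4 1 1 2 1 = 0 := by decide
@[simp] lemma eps4_1122 : eps4 1 1 2 2 = 0 := by decide
@[simp] lemma eps4_1123 : eps4 1 1 2 3 = 0 := by decide
@[simp] lemma eps4_1130 : eps4 1 1 3 0 = 0 := by decide
@[simp] lemma eps4_1131 : eps4 1 1 3 1 = 0 := by decide
@[simp] lemma eps4_1132 : eps4 1 1 3 2 = 0 := by decide
@[simp] lemma eps4_1133 : eps4 1 1 3 3 = 0 := by decide
@[simp] lemma eps4_1200 : eps4 1 2 0 0 = 0 := by decide
@[simp] lemma eps4_1201 : eps4 1 2 0 1 = 0 := by decide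
@[simp] lemma eps4_1202 : eps4 1 2 0 2 = 0 := by decide
@[simp] lemma eps4_1203 : eps4 1 2 0 3 = 1 := by decide
@[simp] lemma eps4_1210 : eps4 1 2 1 0 = 0 := by decide
@[simp] lemma eps4_1211 : eps4 1 2 1 1 = 0 := by decide
@[simp] lemma eps4_1212 : eps4 1 2 1 2 = 0 := by decide
@[simp] lemma eps4_1213 : eps4 1 2 1 3 = 0 := by decide
@[simp] lemma eps4_1220 : eps4 1 2 2 0 = 0 := by decide
@[simp] lemma eps4_1221 : eps4 1 2 2 1 = 0 := by decide
@[simp] lemma eps4_1222 : eps4 1 2 2 2 = 0 := by decide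
@[simp] lemma eps4_1223 : eps4 1 2 2 3 = 0 := by decide
@[simp] lemma eps4_1230 : eps4 1 2 3 0 = -1 := by decide
@[simp] lemma eps4_1231 : eps4 1 2 3 1 = 0 := by decide
@[simp] lemma eps4_1232 : eps4 1 2 3 2 = 0 := by decide
@[simp] lemma eps4_1233 : eps4 1 2 3 3 = 0 := by decide
@[simp] lemma eps4_1300 : eps4 1 3 0 0 = 0 := by decide
@[simp] lemma eps4_1301 : eps4 1 3 0 1 = 0 := by decide
@[simp] lemma eps4_1302 : eps4 1 3 0 2 = -1 := by decide
@[simp] lemma eps4_1303 : eps4 1 3 0 3 = 0 := by decide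
@[simp] lemma eps4_1310 : eps4 1 3 1 0 = 0 := by decide
@[simp] lemma eps4_1311 : eps4 1 3 1 1 = 0 := by decide
@[simp] lemma eps4_1312 : eps4 1 3 1 2 = 0 := by decide
@[simp] lemma eps4_1313 : eps4 1 3 1 3 = 0 := by decide
@[simp] lemma eps4_1320 : eps4 1 3 2 0 = 1 := by decide
@[simp] lemma eps4_1321 : eps4 1 3 2 1 = 0 := by decide
@[simp] lemma eps4_1322 : eps4 1 3 2 2 = 0 := by decide
@[simp] lemma eps4_1323 : eps4 1 3 2 3 = 0 := by decide
@[simp] lemma eps4_1330 : eps4 1 3 3 0 = 0 := by decide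
@[simp] lemma eps4_1331 : eps4 1 3 3 1 = 0 := by decide
@[simp] lemma eps4_1332 : eps4 1 3 3 2 = 0 := by decide
@[simp] lemma eps4_1333 : eps4 1 3 3 3 = 0 := by decide
@[simp] lemma eps4_2000 : eps4 2 0 0 0 = 0 := by decide
@[simp] lemma eps4_2001 : eps4 2 0 0 1 = 0 := by decide
@[simp] lemma eps4_2002 : eps4 2 0 0 2 = 0 := by decide
@[simp] lemma eps4_2003 : eps4 2 0 0 3 = 0 := by decide
@[simp] lemma eps4_2010 : eps4 2 0 1 0 = 0 := by decide
@[simp] lemma eps4_2011 : eps4 2 0 1 1 = 0 := by decide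
@[simp] lemma eps4_2012 : eps4 2 0 1 2 = 0 := by decide
@[simp] lemma eps4_2013 : eps4 2 0 1 3 = 1 := by decide
@[simp] lemma eps4_2020 : eps4 2 0 2 0 = 0 := by decide
@[simp] lemma eps4_2021 : eps4 2 0 2 1 = 0 := by decide
@[simp] lemma eps4_2022 : eps4 2 0 2 2 = 0 := by decide
@[simp] lemma eps4_2023 : eps4 2 0 2 3 = 0 := by decide
@[simp] lemma eps4_2030 : eps4 2 0 3 0 = 0 := by decide
@[simp] lemma eps4_2031 : eps4 2 0 3 1 = -1 := by decide
@[simp] lemma eps4_2032 : eps4 2 0 3 2 = 0 := by decide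
@[simp] lemma eps4_2033 : eps4 2 0 3 3 = 0 := by decide
@[simp] lemma eps4_2100 : eps4 2 1 0 0 = 0 := by decide
@[simp] lemma eps4_2101 : eps4 2 1 0 1 = 0 := by decide
@[simp] lemma eps4_2102 : eps4 2 1 0 2 = 0 := by decide
@[simp] lemma eps4_2103 : eps4 2 1 0 3 = -1 := by decide
@[simp] lemma eps4_2110 : eps4 2 1 1 0 = 0 := by decide
@[simp] lemma eps4_2111 : eps4 2 1 1 1 = 0 := by decide
@[simp] lemma eps4_2112 : eps4 2 1 1 2 = 0 := by decide
@[simp] lemma eps4_2113 : eps4 2 1 1 3 = 0 := by decide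
@[simp] lemma eps4_2120 : eps4 2 1 2 0 = 0 := by decide
@[simp] lemma eps4_2121 : eps4 2 1 2 1 = 0 := by decide
@[simp] lemma eps4_2122 : eps4 2 1 2 2 = 0 := by decide
@[simp] lemma eps4_2123 : eps4 2 1 2 3 = 0 := by decide
@[simp] lemma eps4_2130 : eps4 2 1 3 0 = 1 := by decide
@[simp] lemma eps4_2131 : eps4 2 1 3 1 = 0 := by decide
@[simp] lemma eps4_2132 : eps4 2 1 3 2 = 0 := by decide
@[simp] lemma eps4_2133 : eps4 2 1 3 3 = 0 := by decide
@[simp] lemma eps4_2200 : eps4 2 2 0 0 = 0 := by decide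
@[simp] lemma eps4_2201 : eps4 2 2 0 1 = 0 := by decide
@[simp] lemma eps4_2202 : eps4 2 2 0 2 = 0 := by decide
@[simp] lemma eps4_2203 : eps4 2 2 0 3 = 0 := by decide
@[simp] lemma eps4_2210 : eps4 2 2 1 0 = 0 := by decide
@[simp] lemma eps4_2211 : eps4 2 2 1 1 = 0 := by decide
@[simp] lemma eps4_2212 : eps4 2 2 1 2 = 0 := by decide
@[simp] lemma eps4_2213 : eps4 2 2 1 3 = 0 := by decide
@[simp] lemma eps4_2220 : eps4 2 2 2 0 = 0 := by decide
@[simp] lemma eps4_2221 : eps4 2 2 2 1 = 0 := by decide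
@[simp] lemma eps4_2222 : eps4 2 2 2 2 = 0 := by decide
@[simp] lemma eps4_2223 : eps4 2 2 2 3 = 0 := by decide
@[simp] lemma eps4_2230 : eps4 2 2 3 0 = 0 := by decide
@[simp] lemma eps4_2231 : eps4 2 2 3 1 = 0 := by decide
@[simp] lemma eps4_2232 : eps4 2 2 3 2 = 0 := by decide
@[simp] lemma eps4_2233 : eps4 2 2 3 3 = 0 := by decide
@[simp] lemma eps4_2300 : eps4 2 3 0 0 = 0 := by decide
@[simp] lemma eps4_2301 : eps4 2 3 0 1 = 1 := by decide
@[simp] lemma eps4_2302 : eps4 2 3 0 2 = 0 := by decide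
@[simp] lemma eps4_2303 : eps4 2 3 0 3 = 0 := by decide
@[simp] lemma eps4_2310 : eps4 2 3 1 0 = -1 := by decide
@[simp] lemma eps4_2311 : eps4 2 3 1 1 = 0 := by decide
@[simp] lemma eps4_2312 : eps4 2 3 1 2 = 0 := by decide
@[simp] lemma eps4_2313 : eps4 2 3 1 3 = 0 := by decide
@[simp] lemma eps4_2320 : eps4 2 3 2 0 = 0 := by decide
@[simp] lemma eps4_2321 : eps4 2 3 2 1 = 0 := by decide
@[simp] lemma eps4_2322 : eps4 2 3 2 2 = 0 := by decide
@[simp] lemma eps4_2323 : eps4 2 3 2 3 = 0 := by decide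
@[simp] lemma eps4_2330 : eps4 2 3 3 0 = 0 := by decide
@[simp] lemma eps4_2331 : eps4 2 3 3 1 = 0 := by decide
@[simp] lemma eps4_2332 : eps4 2 3 3 2 = 0 := by decide
@[simp] lemma eps4_2333 : eps4 2 3 3 3 = 0 := by decide
@[simp] lemma eps4_3000 : eps4 3 0 0 0 = 0 := by decide
@[simp] lemma eps4_3001 : eps4 3 0 0 1 = 0 := by decide
@[simp] lemma eps4_3002 : eps4 3 0 0 2 = 0 := by decide
@[simp] lemma eps4_3003 : eps4 3 0 0 3 = 0 := by decide
@[simp] lemma eps4_3010 : eps4 3 0 1 0 = 0 := by decide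
@[simp] lemma eps4_3011 : eps4 3 0 1 1 = 0 := by decide
@[simp] lemma eps4_3012 : eps4 3 0 1 2 = -1 := by decide
@[simp] lemma eps4_3013 : eps4 3 0 1 3 = 0 := by decide
@[simp] lemma eps4_3020 : eps4 3 0 2 0 = 0 := by decide
@[simp] lemma eps4_3021 : eps4 3 0 2 1 = 1 := by decide
@[simp] lemma eps4_3022 : eps4 3 0 2 2 = 0 := by decide
@[simp] lemma eps4_3023 : eps4 3 0 2 3 = 0 := by decide
@[simp] lemma eps4_3030 : eps4 3 0 3 0 = 0 := by decide
@[simp] lemma eps4_3031 : eps4 3 0 3 1 = 0 := by decide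
@[simp] lemma eps4_3032 : eps4 3 0 3 2 = 0 := by decide
@[simp] lemma eps4_3033 : eps4 3 0 3 3 = 0 := by decide
@[simp] lemma eps4_3100 : eps4 3 1 0 0 = 0 := by decide
@[simp] lemma eps4_3101 : eps4 3 1 0 1 = 0 := by decide
@[simp] lemma eps4_3102 : eps4 3 1 0 2 = 1 := by decide
@[simp] lemma eps4_3103 : eps4 3 1 0 3 = 0 := by decide
@[simp] lemma eps4_3110 : eps4 3 1 1 0 = 0 := by decide
@[simp] lemma eps4_3111 : eps4 3 1 1 1 = 0 := by decide
@[simp] lemma eps4_3112 : eps4 3 1 1 2 = 0 := by decide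
@[simp] lemma eps4_3113 : eps4 3 1 1 3 = 0 := by decide
@[simp] lemma eps4_3120 : eps4 3 1 2 0 = -1 := by decide
@[simp] lemma eps4_3121 : eps4 3 1 2 1 = 0 := by decide
@[simp] lemma eps4_3122 : eps4 3 1 2 2 = 0 := by decide
@[simp] lemma eps4_3123 : eps4 3 1 2 3 = 0 := by decide
@[simp] lemma eps4_3130 : eps4 3 1 3 0 = 0 := by decide
@[simp] lemma eps4_3131 : eps4 3 1 3 1 = 0 := by decide
@[simp] lemma eps4_3132 : eps4 3 1 3 2 = 0 := by decide
@[simp] lemma eps4_3133 : eps4 3 1 3 3 = 0 := by decide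
@[simp] lemma eps4_3200 : eps4 3 2 0 0 = 0 := by decide
@[simp] lemma eps4_3201 : eps4 3 2 0 1 = -1 := by decide
@[simp] lemma eps4_3202 : eps4 3 2 0 2 = 0 := by decide
@[simp] lemma eps4_3203 : eps4 3 2 0 3 = 0 := by decide
@[simp] lemma eps4_3210 : eps4 3 2 1 0 = 1 := by decide
@[simp] lemma eps4_3211 : eps4 3 2 1 1 = 0 := by decide
@[simp] lemma eps4_3212 : eps4 3 2 1 2 = 0 := by decide
@[simp] lemma eps4_3213 : eps4 3 2 1 3 = 0 := by decide
@[simp] lemma eps4_3220 : eps4 3 2 2 0 = 0 := by decide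
@[simp] lemma eps4_3221 : eps4 3 2 2 1 = 0 := by decide
@[simp] lemma eps4_3222 : eps4 3 2 2 2 = 0 := by decide
@[simp] lemma eps4_3223 : eps4 3 2 2 3 = 0 := by decide
@[simp] lemma eps4_3230 : eps4 3 2 3 0 = 0 := by decide
@[simp] lemma eps4_3231 : eps4 3 2 3 1 = 0 := by decide
@[simp] lemma eps4_3232 : eps4 3 2 3 2 = 0 := by decide
@[simp] lemma eps4_3233 : eps4 3 2 3 3 = 0 := by decide
@[simp] lemma eps4_3300 : eps4 3 3 0 0 = 0 := by decide
@[simp] lemma eps4_3301 : eps4 3 3 0 1 = 0 := by decide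
@[simp] lemma eps4_3302 : eps4 3 3 0 2 = 0 := by decide
@[simp] lemma eps4_3303 : eps4 3 3 0 3 = 0 := by decide
@[simp] lemma eps4_3310 : eps4 3 3 1 0 = 0 := by decide
@[simp] lemma eps4_3311 : eps4 3 3 1 1 = 0 := by decide
@[simp] lemma eps4_3312 : eps4 3 3 1 2 = 0 := by decide
@[simp] lemma eps4_3313 : eps4 3 3 1 3 = 0 := by decide
@[simp] lemma eps4_3320 : eps4 3 3 2 0 = 0 := by decide
@[simp] lemma eps4_3321 : eps4 3 3 2 1 = 0 := by decide
@[simp] lemma eps4_3322 : eps4 3 3 2 2 = 0 := by decide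
@[simp] lemma eps4_3323 : eps4 3 3 2 3 = 0 := by decide
@[simp] lemma eps4_3330 : eps4 3 3 3 0 = 0 := by decide
@[simp] lemma eps4_3331 : eps4 3 3 3 1 = 0 := by decide
@[simp] lemma eps4_3332 : eps4 3 3 3 2 = 0 := by decide
@[simp] lemma eps4_3333 : eps4 3 3 3 3 = 0 := by decide

set_option maxHeartbeats 2000000

@[simp] lemma etaD0 : etaD 0 = -1 := by simp [etaD]
@[simp] lemma etaD1 : etaD 1 = 1 := by simp [etaD]
@[simp] lemma etaD2 : etaD 2 = 1 := by simp [etaD]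
@[simp] lemma etaD3 : etaD 3 = 1 := by simp [etaD]

/-- auxiliary determinant form -/
def Det (a b c d : Fin 4 → ℝ) : ℝ :=
  ∑ I : Fin 4, ∑ J : Fin 4, ∑ K : Fin 4, ∑ L : Fin 4,
    (eps4 I J K L : ℝ) * a I * b J * c K * d L

lemma key (a b c d : Fin 4 → ℝ) :
    Vpair (hodge (wedgeV a b)) (hodge (wedgeV c d)) = -4 * Det a b c d := by
  simp [Vpair, hodge, wedgeV, Det, Fin.sum_univ_four]
  ring
lemma Det_explicit (a b c d : Fin 4 → ℝ) :
    Det a b c d =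
      ∑ I : Fin 4, ∑ J : Fin 4, ∑ K : Fin 4, ∑ L : Fin 4,
        (eps4 I J K L : ℝ) * a I * b J * c K * d L := rfl

lemma Det_poly (a b c d : Fin 4 → ℝ) :
    Det a b c d =
      a 0 * b 1 * c 2 * d 3 - a 0 * b 1 * c 3 * d 2 - a 0 * b 2 * c 1 * d 3
      + a 0 * b 2 * c 3 * d 1 + a 0 * b 3 * c 1 * d 2 - a 0 * b 3 * c 2 * d 1
      - a 1 * b 0 * c 2 * d 3 + a 1 * b 0 * c 3 * d 2 + a 1 * b 2 * c 0 * d 3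
      - a 1 * b 2 * c 3 * d 0 - a 1 * b 3 * c 0 * d 2 + a 1 * b 3 * c 2 * d 0
      + a 2 * b 0 * c 1 * d 3 - a 2 * b 0 * c 3 * d 1 - a 2 * b 1 * c 0 * d 3
      + a 2 * b 1 * c 3 * d 0 + a 2 * b 3 * c 0 * d 1 - a 2 * b 3 * c 1 * d 0
      - a 3 * b 0 * c 1 * d 2 + a 3 * b 0 * c 2 * d 1 + a 3 * b 1 * c 0 * d 2
      - a 3 * b 1 * c 2 * d 0 - a 3 * b 2 * c 0 * d 1 + a 3 * b 2 * c 1 * d 0 := by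
  simp [Det, Fin.sum_univ_four]
  ring


lemma fin4_cases : ∀ P : Fin 4, P = 0 ∨ P = 1 ∨ P = 2 ∨ P = 3 := by decide

lemma detP (e : Fin 4 → Fin 4 → ℝ) (P Q R S : Fin 4) (h : eps4 P Q R S ≠ 0) :
    (eps4 P Q R S : ℝ) * Det (e P) (e Q) (e R) (e S) = Det (e 0) (e 1) (e 2) (e 3) := by
  rcases fin4_cases P with rfl|rfl|rfl|rfl <;> rcases fin4_cases Q with rfl|rfl|rfl|rfl <;>
    rcases fin4_cases R with rfl|rfl|rfl|rfl <;> rcases fin4_cases S with rfl|rfl|rfl|rfl <;>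
    first
      | exact absurd (by decide) h
      | (simp only [Det_poly];
         simp only [eps4_0123, eps4_0132, eps4_0213, eps4_0231, eps4_0312, eps4_0321, eps4_1023, eps4_1032, eps4_1203, eps4_1230, eps4_1302, eps4_1320, eps4_2013, eps4_2031, eps4_2103, eps4_2130, eps4_2301, eps4_2310, eps4_3012, eps4_3021, eps4_3102, eps4_3120, eps4_3201, eps4_3210, Int.cast_one, Int.cast_neg];
         ring)

lemma Vpair_negneg (e : Fin 4 → Fin 4 → ℝ) (P Q R S : Fin 4) :
    Vpair (Bneg e P Q) (Bneg e R S) =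
      Vpair (hodge (wedgeV (e P) (e Q))) (hodge (wedgeV (e R) (e S))) := by
  simp only [Vpair, Bneg, mul_neg, neg_mul, neg_neg]

lemma lemG1 (a b : Fin 4 → ℝ) (J : Fin 4) :
    (∑ I : Fin 4, ∑ K : Fin 4, eta I K * a K * (-hodge (wedgeV a b) I J)) = 0 := by
  rcases fin4_cases J with rfl|rfl|rfl|rfl <;>
    (simp [eta, etaD, hodge, wedgeV, Fin.sum_univ_four]; try ring)

lemma hodge_neg (B : Fin 4 → Fin 4 → ℝ) (I J : Fin 4) :
    hodge (fun K L => -(B K L)) I J = -(hodge B I J) := by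
  simp [hodge, Fin.sum_univ_four]; ring

lemma hodge_hodge_wedge (a b : Fin 4 → ℝ) (I J : Fin 4) :
    hodge (hodge (wedgeV a b)) I J = -(wedgeV a b I J) := by
  rcases fin4_cases I with rfl|rfl|rfl|rfl <;> rcases fin4_cases J with rfl|rfl|rfl|rfl <;>
    (simp [hodge, wedgeV, Fin.sum_univ_four]; try ring)

/-- The non-geometric sector: for a basis `e`, the field `B' = -∗(e ∧ e)`
satisfies Condition G1 (linear simplicity with some nonzero normals `n_P`)
and Condition G2 (volume matching with orientation signs over all
partitions), yet it cannot be written as `∗(e' ∧ e')` for any real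
vectors `e'_P`. -/
theorem nongeometric_sector (e : Fin 4 → Fin 4 → ℝ)
    (he : LinearIndependent ℝ e) :
    (∀ P : Fin 4, ∃ n : Fin 4 → ℝ, n ≠ 0 ∧
      ∀ Q J, (∑ I : Fin 4, ∑ K : Fin 4, eta I K * n K * Bneg e P Q I J) = 0) ∧
    (∀ P Q R S P' Q' R' S' : Fin 4,
      eps4 P Q R S ≠ 0 → eps4 P' Q' R' S' ≠ 0 →
      (eps4 P Q R S : ℝ) * Vpair (Bneg e P Q) (Bneg e R S) =
        (eps4 P' Q' R' S' : ℝ) * Vpair (Bneg e P' Q') (Bneg e R' S')) ∧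
    ¬∃ e' : Fin 4 → Fin 4 → ℝ,
      ∀ P Q I J, Bneg e P Q I J = hodge (wedgeV (e' P) (e' Q)) I J := by
  refine ⟨?_, ?_, ?_⟩
  · -- G1
    intro P
    refine ⟨e P, he.ne_zero P, fun Q J => ?_⟩
    exact lemG1 (e P) (e Q) J
  · -- G2
    intro P Q R S P' Q' R' S' h1 h2
    rw [Vpair_negneg, Vpair_negneg, key, key]
    have d1 := detP e P Q R S h1
    have d2 := detP e P' Q' R' S' h2
    linear_combination (-4 : ℝ) * d1 + (4 : ℝ) * d2
  · -- not geometric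
    rintro ⟨e', h⟩
    have hW : ∀ P Q I J, wedgeV (e' P) (e' Q) I J = -(wedgeV (e P) (e Q) I J) := by
      intro P Q I J
      have hfun : hodge (wedgeV (e' P) (e' Q))
          = fun K L => -(hodge (wedgeV (e P) (e Q)) K L) := by
        funext K L
        exact (h P Q K L).symm
      have h1 : hodge (hodge (wedgeV (e' P) (e' Q))) I J
          = hodge (fun K L => -(hodge (wedgeV (e P) (e Q)) K L)) I J := by rw [hfun]
      rw [hodge_hodge_wedge, hodge_neg, hodge_hodge_wedge] at h1
      linarith
    have hcard : Fintype.card (Fin 4) = Module.finrank ℝ (Fin 4 → ℝ) := by simp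
    let b : Module.Basis (Fin 4) ℝ (Fin 4 → ℝ) := basisOfLinearIndependentOfCardEqFinrank he hcard
    have hbe : ∀ K, b K = e K := fun K => by
      simp [b, coe_basisOfLinearIndependentOfCardEqFinrank]
    set c : Fin 4 → Fin 4 → ℝ := fun P K => b.repr (e' P) K with hc
    have hrepr_e : ∀ X K, b.repr (e X) K = if X = K then 1 else 0 := by
      intro X K; rw [← hbe X, b.repr_self]; exact Finsupp.single_apply
    have hv : ∀ P Q J, (e' Q J) • e' P - (e' P J) • e' Q
        = (e P J) • e Q - (e Q J) • e P := by
      intro P Q J; funext I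
      have hw := hW P Q I J
      simp only [wedgeV] at hw
      simp only [Pi.sub_apply, Pi.smul_apply, smul_eq_mul]
      linarith
    have hc1 : ∀ P Q J K, e' Q J * c P K - e' P J * c Q K
        = e P J * (if Q = K then (1:ℝ) else 0) - e Q J * (if P = K then (1:ℝ) else 0) := by
      intro P Q J K
      have hx := congrArg (fun v => b.repr v K) (hv P Q J)
      simpa [map_sub, map_smul, Finsupp.sub_apply, Finsupp.smul_apply, smul_eq_mul,
        hrepr_e, hc] using hx
    have hv2 : ∀ P Q K, (c P K) • e' Q - (c Q K) • e' P
        = (if Q = K then (1:ℝ) else 0) • e P - (if P = K then (1:ℝ) else 0) • e Q := by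
      intro P Q K; funext J
      have hx := hc1 P Q J K
      simp only [Pi.sub_apply, Pi.smul_apply, smul_eq_mul]
      linear_combination hx
    have hm : ∀ P Q K L, c P K * c Q L - c Q K * c P L
        = (if Q = K then (if P = L then (1:ℝ) else 0) else 0)
          - (if P = K then (if Q = L then (1:ℝ) else 0) else 0) := by
      intro P Q K L
      have hx := congrArg (fun v => b.repr v L) (hv2 P Q K)
      simpa [map_sub, map_smul, Finsupp.sub_apply, Finsupp.smul_apply, smul_eq_mul,
        hrepr_e, hc, ite_smul, zero_smul, one_smul, map_zero, Finsupp.zero_apply,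
        apply_ite (fun v => (b.repr v) L), ite_mul, mul_ite, mul_one, mul_zero,
        one_mul, zero_mul] using hx
    have zoff : ∀ P K, P ≠ K → P ≠ 3 → K ≠ 3 → c P K = 0 := by
      intro P K hPK hP3 hK3
      have h1 : c P 3 * c 3 K - c 3 3 * c P K = 0 := by
        have hx := hm P 3 3 K
        simp [hPK, hP3, hK3, Ne.symm hK3, Ne.symm hP3, Ne.symm hPK] at hx
        linear_combination hx
      have h2 : c P K * c 3 P - c 3 K * c P P = 0 := by
        have hx := hm P 3 K P
        simp [hPK, hP3, hK3, Ne.symm hK3, Ne.symm hP3, Ne.symm hPK] at hx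
        linear_combination hx
      have h3 : c P P * c 3 3 - c 3 P * c P 3 = -1 := by
        have hx := hm P 3 P 3
        simp [hP3, Ne.symm hP3] at hx
        linear_combination hx
      linear_combination c P P * h1 + c P 3 * h2 + c P K * h3
    have hdiag : ∀ P Q, P ≠ Q → P ≠ 3 → Q ≠ 3 → c P P * c Q Q = -1 := by
      intro P Q hPQ hP3 hQ3
      have hx := hm P Q P Q
      simp [hPQ, Ne.symm hPQ] at hx
      have z1 := zoff Q P (Ne.symm hPQ) hQ3 hP3
      have z2 := zoff P Q hPQ hP3 hQ3
      nlinarith [hx, z1, z2]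
    have h01 := hdiag 0 1 (by decide) (by decide) (by decide)
    have h02 := hdiag 0 2 (by decide) (by decide) (by decide)
    have h12 := hdiag 1 2 (by decide) (by decide) (by decide)
    have hsq : (c 0 0 * c 1 1 * c 2 2) ^ 2 = -1 := by
      calc (c 0 0 * c 1 1 * c 2 2) ^ 2
          = (c 0 0 * c 1 1) * (c 0 0 * c 2 2) * (c 1 1 * c 2 2) := by ring
        _ = (-1) * (-1) * (-1) := by rw [h01, h02, h12]
        _ = -1 := by norm_num
    linarith [sq_nonneg (c 0 0 * c 1 1 * c 2 2), hsq]
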